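/- arXiv:1602.00098 — 2 statements merged into one kernel-verified Lean document; each statement's English description precedes it below -/
import Mathlib

section
/- For every d ≥ 1 and every ε with 0 < ε < π, there exist a continuous function h : T^d → R and a constant β > 0 such that: (1) the Fourier coefficients ĥ(m) = ∫_{T^d} h(t) e^{-i⟨m,t⟩} dλ(t) satisfy ĥ(m) ≥ 0 for all m ∈ Z^d and ĥ(0) = 0; (2) sup_{t∈T^d} h(t) = h(0) = 1; (3) h(t) ≤ -β for every t ∈ T^d with max_{1≤j≤d} |t_j| ≥ ε. -/
open MeasureTheory ProbabilityTheory Matrix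

noncomputable section

/-- Normalized Lebesgue measure `λ` on `T^d = [-π,π]^d`, with `λ(T^d) = 1`. -/
def normLeb (d : ℕ) : Measure (Fin d → ℝ) :=
  (ENNReal.ofReal ((2 * Real.pi) ^ d))⁻¹ •
    (volume.restrict {t : Fin d → ℝ | ∀ j, |t j| ≤ Real.pi})

/-- Fourier coefficient `μ̂(m) = ∫_{T^d} e^{i⟨m,t⟩} dμ(t)` for `m ∈ ℤ^d`. -/
def muHat {d : ℕ} (μ : Measure (Fin d → ℝ)) (m : Fin d → ℤ) : ℂ :=
  ∫ t, Complex.exp (Complex.I * (∑ j, (m j : ℂ) * (t j : ℂ))) ∂μ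

/-- The matrix `Σ_A = (μ̂(j-k))_{j,k ∈ A}` (real, since `μ` is symmetric). -/
def SigmaA {d : ℕ} (μ : Measure (Fin d → ℝ)) (A : Finset (Fin d → ℤ)) :
    Matrix A A ℝ :=
  fun j k => (muHat μ (j.1 - k.1)).re

/-- `X` is a centered Gaussian vector with covariance matrix `S` (under `P`):
every linear combination of the coordinates is a centered one-dimensional
Gaussian with the corresponding variance. -/
def IsCenteredGaussianVec {ι : Type*} [Fintype ι] {Ω : Type*} [MeasurableSpace Ω]
    (P : Measure Ω) (X : ι → Ω → ℝ) (S : Matrix ι ι ℝ) : Prop :=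
  ∀ u : ι → ℝ,
    P.map (fun ω => ∑ i, u i * X i ω) =
      gaussianReal 0 (Real.toNNReal (u ⬝ᵥ S.mulVec u))

/-- Fourier coefficient `ĥ(m) = ∫_{T^d} h(t) e^{-i⟨m,t⟩} dλ(t)`. -/
def fCoeff (d : ℕ) (h : (Fin d → ℝ) → ℝ) (m : Fin d → ℤ) : ℂ :=
  ∫ t, (h t : ℂ) * Complex.exp (-Complex.I * ∑ j, (m j : ℂ) * (t j : ℂ)) ∂(normLeb d)

/-!
The kernel `cos (x / 2) ^ (2 * n) = 4⁻ⁿ ∑ₗ C(2n, l) e^{i(l - n)x}` has nonnegative Fourier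
coefficients, equals `1` at `0`, lies in `[0, 1]`, and is at most `cos (ε / 2) ^ (2 * n)` when
`ε ≤ |x| ≤ π`. Its tensor power `G t = ∏ⱼ cos (tⱼ / 2) ^ (2 * n)` inherits these properties and
has mean `a = (C(2n, n) / 4ⁿ) ^ d ≥ (2n)⁻ᵈ`. Since `cos (ε / 2) ^ (2 * n)` decays exponentially
in `n`, for large `n` it drops below `a`, and `h = (G - a) / (1 - a)` works with
`β = (a - cos (ε / 2) ^ (2 * n)) / (1 - a)`.
-/

open Real Set Finset

theorem box_eq_pi (d : ℕ) :
    {t : Fin d → ℝ | ∀ j, |t j| ≤ π} = univ.pi fun _ => Icc (-π) π := by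
  ext t
  simp only [Set.mem_ofPred_eq, mem_univ_pi, Set.mem_Icc, abs_le]

theorem normLeb_eq_smul_pi (d : ℕ) :
    normLeb d = (ENNReal.ofReal ((2 * π) ^ d))⁻¹ •
      Measure.pi fun _ : Fin d => volume.restrict (Icc (-π) π) := by
  rw [normLeb, box_eq_pi, volume_pi, Measure.restrict_pi_pi]

theorem integrable_normLeb {d : ℕ} {f : (Fin d → ℝ) → ℂ} (hf : Continuous f) :
    Integrable f (normLeb d) := by
  refine Integrable.smul_measure ?_ (ENNReal.inv_ne_top.mpr (by positivity))
  rw [box_eq_pi]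
  exact hf.continuousOn.integrableOn_compact (isCompact_univ_pi fun _ => isCompact_Icc)

theorem integral_normLeb_prod {d : ℕ} (f : Fin d → ℝ → ℂ) :
    ∫ t, ∏ j, f j (t j) ∂normLeb d = ∏ j, (2 * π : ℂ)⁻¹ * ∫ x in Icc (-π) π, f j x := by
  rw [normLeb_eq_smul_pi, integral_smul_measure, integral_fintype_prod_eq_prod,
    prod_mul_distrib, prod_const, card_univ, Fintype.card_fin, ENNReal.toReal_inv,
    ENNReal.toReal_ofReal (by positivity), Complex.real_smul]
  push_cast
  rw [inv_pow]

def fourierCoeffIcc (f : ℝ → ℂ) (k : ℤ) : ℂ :=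
  (2 * π : ℂ)⁻¹ * ∫ x in Icc (-π) π, f x * Complex.exp (-Complex.I * (k * x))

theorem fCoeff_prod {d : ℕ} (f : Fin d → ℝ → ℝ) (m : Fin d → ℤ) :
    fCoeff d (fun t => ∏ j, f j (t j)) m = ∏ j, fourierCoeffIcc (fun x => f j x) (m j) := by
  have h : ∀ t : Fin d → ℝ, ((∏ j, f j (t j) : ℝ) : ℂ) *
      Complex.exp (-Complex.I * ∑ j, (m j : ℂ) * (t j : ℂ)) =
      ∏ j, (f j (t j) : ℂ) * Complex.exp (-Complex.I * (m j * t j)) := by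
    intro t
    rw [mul_sum, Complex.exp_sum, Complex.ofReal_prod, prod_mul_distrib]
  rw [fCoeff]
  simp_rw [h]
  rw [integral_normLeb_prod fun j x => (f j x : ℂ) * Complex.exp (-Complex.I * (m j * x))]
  rfl

theorem integral_Icc_exp_int_mul (k : ℤ) :
    ∫ x in Icc (-π) π, Complex.exp (Complex.I * (k * x)) = if k = 0 then (2 * π : ℂ) else 0 := by
  rw [integral_Icc_eq_integral_Ioc, ← intervalIntegral.integral_of_le (by linarith [pi_pos])]
  split_ifs with hk
  · simp [hk]
    ring
  · have hc : Complex.I * k ≠ 0 := by simp [Complex.I_ne_zero, hk]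
    have hper : Complex.exp (Complex.I * k * π) = Complex.exp (Complex.I * k * (-π : ℝ)) := by
      rw [Complex.exp_eq_exp_iff_exists_int]
      exact ⟨k, by push_cast; ring⟩
    simp_rw [← mul_assoc]
    rw [integral_exp_mul_complex hc, hper, sub_self, zero_div]

theorem fourierCoeffIcc_exp_int_mul (j k : ℤ) :
    fourierCoeffIcc (fun x => Complex.exp (Complex.I * (j * x))) k = if j = k then 1 else 0 := by
  have h : ∀ x : ℝ, Complex.exp (Complex.I * (j * x)) * Complex.exp (-Complex.I * (k * x)) =
      Complex.exp (Complex.I * (((j - k : ℤ) : ℂ) * x)) := by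
    intro x
    rw [← Complex.exp_add]
    push_cast
    ring_nf
  simp_rw [fourierCoeffIcc, h, integral_Icc_exp_int_mul, sub_eq_zero]
  split_ifs
  · field_simp
  · simp

theorem fCoeff_one (d : ℕ) (m : Fin d → ℤ) : fCoeff d (fun _ => 1) m = if m = 0 then 1 else 0 := by
  have h := fCoeff_prod (fun (_ : Fin d) (_ : ℝ) => (1 : ℝ)) m
  have hone : ∀ k : ℤ, fourierCoeffIcc (fun _ => 1) k = if k = 0 then 1 else 0 := by
    simpa [eq_comm] using fourierCoeffIcc_exp_int_mul 0
  simp only [prod_const_one, Complex.ofReal_one, hone] at h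
  rw [h, prod_boole]
  simp [funext_iff]

theorem fCoeff_sub_const_div {d : ℕ} {G : (Fin d → ℝ) → ℝ} (hG : Continuous G) (a b : ℝ)
    (m : Fin d → ℤ) :
    fCoeff d (fun t => (G t - a) / b) m = (fCoeff d G m - if m = 0 then (a : ℂ) else 0) / b := by
  set E : (Fin d → ℝ) → ℂ := fun t => Complex.exp (-Complex.I * ∑ j, (m j : ℂ) * (t j : ℂ))
  have hE : Continuous E := by fun_prop
  have hmean : ∫ t, E t ∂normLeb d = if m = 0 then 1 else 0 := by
    rw [← fCoeff_one d m, fCoeff]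
    simp only [Complex.ofReal_one, one_mul, E]
  have hsplit : ∀ t, (((G t - a) / b : ℝ) : ℂ) * E t = (b : ℂ)⁻¹ * ((G t : ℂ) * E t - a * E t) := by
    intro t
    push_cast
    ring
  rw [fCoeff, funext hsplit, integral_const_mul, integral_sub, integral_const_mul, hmean]
  · rw [fCoeff, mul_ite, mul_one, mul_zero, div_eq_inv_mul]
  · exact integrable_normLeb (by fun_prop)
  · exact integrable_normLeb (by fun_prop)

theorem fourierCoeffIcc_sum_exp {ι : Type*} (s : Finset ι) (c : ι → ℂ) (e : ι → ℤ) (k : ℤ) :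
    fourierCoeffIcc (fun x => ∑ l ∈ s, c l * Complex.exp (Complex.I * (e l * x))) k =
      ∑ l ∈ s, if e l = k then c l else 0 := by
  have hint : ∀ l ∈ s, IntegrableOn (fun x : ℝ => c l * Complex.exp (Complex.I * (e l * x)) *
      Complex.exp (-Complex.I * (k * x))) (Icc (-π) π) := fun l _ =>
    Continuous.integrableOn_Icc (by fun_prop)
  simp_rw [fourierCoeffIcc, sum_mul, integral_finsetSum s hint, mul_sum, mul_assoc,
    integral_const_mul, mul_left_comm _ (c _)]
  refine sum_congr rfl fun l _ => ?_
  have h := fourierCoeffIcc_exp_int_mul (e l) k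
  rw [fourierCoeffIcc] at h
  rw [h, mul_ite, mul_one, mul_zero]

theorem cos_half_pow_eq_sum (n : ℕ) (x : ℝ) :
    ((cos (x / 2) ^ (2 * n) : ℝ) : ℂ) = ∑ l ∈ range (2 * n + 1),
      (((2 * n).choose l / 4 ^ n : ℝ) : ℂ) * Complex.exp (Complex.I * (((l - n : ℤ) : ℂ) * x)) := by
  rw [Complex.ofReal_pow, Complex.ofReal_cos, Complex.cos, div_pow, add_pow, sum_div]
  refine sum_congr rfl fun l hl => ?_
  have hl : l ≤ 2 * n := Nat.lt_succ_iff.mp (Finset.mem_range.mp hl)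
  rw [← Complex.exp_nat_mul, ← Complex.exp_nat_mul, ← Complex.exp_add, pow_mul]
  push_cast [hl]
  ring_nf

def cosPowCoeff (n : ℕ) (k : ℤ) : ℝ :=
  ∑ l ∈ range (2 * n + 1), if (l - n : ℤ) = k then ((2 * n).choose l / 4 ^ n : ℝ) else 0

theorem fourierCoeffIcc_cos_half_pow (n : ℕ) (k : ℤ) :
    fourierCoeffIcc (fun x => ((cos (x / 2) ^ (2 * n) : ℝ) : ℂ)) k = cosPowCoeff n k := by
  simp_rw [cos_half_pow_eq_sum, fourierCoeffIcc_sum_exp, cosPowCoeff]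
  push_cast [apply_ite (fun r : ℝ => (r : ℂ))]
  rfl

theorem cosPowCoeff_nonneg (n : ℕ) (k : ℤ) : 0 ≤ cosPowCoeff n k :=
  sum_nonneg fun _ _ => by split_ifs <;> positivity

theorem cosPowCoeff_zero (n : ℕ) : cosPowCoeff n 0 = n.centralBinom / 4 ^ n := by
  simp only [cosPowCoeff, sub_eq_zero, Nat.cast_inj, sum_ite_eq', Finset.mem_range,
    Nat.centralBinom_eq_two_mul_choose]
  rw [if_pos (by omega)]

theorem inv_two_mul_le_cosPowCoeff_zero {n : ℕ} (hn : 0 < n) :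
    (2 * n : ℝ)⁻¹ ≤ cosPowCoeff n 0 := by
  have h : ((4 ^ n : ℕ) : ℝ) ≤ (2 * n * n.centralBinom : ℕ) :=
    Nat.cast_le.mpr (Nat.four_pow_le_two_mul_self_mul_centralBinom n hn)
  push_cast at h
  rw [cosPowCoeff_zero, inv_le_iff_one_le_mul₀ (by positivity), div_mul_eq_mul_div,
    one_le_div (by positivity)]
  linarith

theorem cosPowCoeff_zero_lt_one {n : ℕ} (hn : n ≠ 0) : cosPowCoeff n 0 < 1 := by
  rw [cosPowCoeff_zero, div_lt_one (by positivity)]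
  exact_mod_cast Nat.centralBinom_lt_four_pow hn

theorem cos_half_pow_nonneg (n : ℕ) (x : ℝ) : 0 ≤ cos (x / 2) ^ (2 * n) :=
  (even_two_mul n).pow_nonneg _

theorem cos_half_pow_le_one (n : ℕ) (x : ℝ) : cos (x / 2) ^ (2 * n) ≤ 1 := by
  rw [pow_mul]
  exact pow_le_one₀ (sq_nonneg _) (cos_sq_le_one _)

theorem cos_half_pow_le_of_le_abs (n : ℕ) {ε x : ℝ} (hε : 0 ≤ ε) (hεx : ε ≤ |x|) (hx : |x| ≤ π) :
    cos (x / 2) ^ (2 * n) ≤ cos (ε / 2) ^ (2 * n) := by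
  rw [← cos_abs (x / 2), abs_div, abs_two]
  refine pow_le_pow_left₀ (cos_nonneg_of_mem_Icc ⟨?_, ?_⟩) ?_ _
  · linarith [pi_pos, abs_nonneg x]
  · linarith
  · exact cos_le_cos_of_nonneg_of_le_pi (by linarith) (by linarith) (by linarith)

theorem prod_cos_half_pow_le {d : ℕ} (n : ℕ) {ε : ℝ} (hε : 0 ≤ ε) {t : Fin d → ℝ}
    (ht : ∀ j, |t j| ≤ π) (hj : ∃ j, ε ≤ |t j|) :
    ∏ j, cos (t j / 2) ^ (2 * n) ≤ cos (ε / 2) ^ (2 * n) := by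
  obtain ⟨j, hj⟩ := hj
  calc ∏ j, cos (t j / 2) ^ (2 * n) ≤ ∏ i ∈ {j}, cos (t i / 2) ^ (2 * n) :=
        prod_le_prod_of_subset_of_le_one (subset_univ _)
          (fun _ _ => cos_half_pow_nonneg _ _) (fun _ _ _ => cos_half_pow_le_one _ _)
    _ ≤ cos (ε / 2) ^ (2 * n) := by
        rw [Finset.prod_singleton]
        exact cos_half_pow_le_of_le_abs n hε hj (ht j)

theorem exists_two_mul_pow_mul_pow_lt_one (d : ℕ) {q : ℝ} (hq0 : 0 ≤ q) (hq1 : q < 1) :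
    ∃ n : ℕ, 0 < n ∧ (2 * n : ℝ) ^ d * q ^ n < 1 := by
  have hlim := tendsto_pow_const_mul_const_pow_of_lt_one d hq0 hq1
  obtain ⟨n, hn, hsmall⟩ := ((Filter.eventually_gt_atTop 0).and
    (hlim.eventually (gt_mem_nhds (by positivity : (0 : ℝ) < (2 ^ d)⁻¹)))).exists
  refine ⟨n, hn, ?_⟩
  rw [← one_div, lt_div_iff₀ (by positivity)] at hsmall
  rw [mul_pow]
  linarith

theorem pow_lt_cosPowCoeff_zero_pow {d n : ℕ} {q : ℝ} (hn : 0 < n)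
    (hsmall : (2 * n : ℝ) ^ d * q ^ n < 1) : q ^ n < cosPowCoeff n 0 ^ d :=
  calc q ^ n < ((2 * n : ℝ) ^ d)⁻¹ := by
        rw [← one_div, lt_div_iff₀ (by positivity)]
        linarith
    _ ≤ cosPowCoeff n 0 ^ d := by
        rw [← inv_pow]
        exact pow_le_pow_left₀ (by positivity) (inv_two_mul_le_cosPowCoeff_zero hn) d

theorem exists_auxiliary_function_h_of_kernel {d : ℕ} {ε b : ℝ} {G : (Fin d → ℝ) → ℝ}
    (hG : Continuous G) {c : (Fin d → ℤ) → ℝ} (hGc : ∀ m, fCoeff d G m = c m)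
    (hc : ∀ m, 0 ≤ c m) (hc1 : c 0 < 1) (hb : b < c 0) (hG0 : G 0 = 1)
    (hG1 : ∀ t : Fin d → ℝ, (∀ j, |t j| ≤ π) → G t ≤ 1)
    (hGb : ∀ t : Fin d → ℝ, (∀ j, |t j| ≤ π) → (∃ j, ε ≤ |t j|) → G t ≤ b) :
    ∃ (h : (Fin d → ℝ) → ℝ) (β : ℝ), 0 < β ∧
      ContinuousOn h {t : Fin d → ℝ | ∀ j, |t j| ≤ π} ∧
      (∀ m : Fin d → ℤ, (fCoeff d h m).im = 0 ∧ 0 ≤ (fCoeff d h m).re) ∧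
      fCoeff d h 0 = 0 ∧
      h 0 = 1 ∧
      (∀ t : Fin d → ℝ, (∀ j, |t j| ≤ π) → h t ≤ 1) ∧
      (∀ t : Fin d → ℝ, (∀ j, |t j| ≤ π) → (∃ j, ε ≤ |t j|) → h t ≤ -β) := by
  have hpos : 0 < 1 - c 0 := sub_pos.mpr hc1
  have hcoeff : ∀ m, fCoeff d (fun t => (G t - c 0) / (1 - c 0)) m =
      ((if m = 0 then 0 else c m / (1 - c 0) : ℝ) : ℂ) := by
    intro m
    rw [fCoeff_sub_const_div hG, hGc]
    split_ifs with hm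
    · simp [hm]
    · push_cast
      ring
  refine ⟨fun t => (G t - c 0) / (1 - c 0), (c 0 - b) / (1 - c 0), by bound,
    (by fun_prop : Continuous _).continuousOn, fun m => ?_, by simp [hcoeff], ?_,
    fun t ht => ?_, fun t ht hj => ?_⟩
  · rw [hcoeff, Complex.ofReal_im, Complex.ofReal_re]
    refine ⟨rfl, ?_⟩
    split_ifs
    exacts [le_rfl, div_nonneg (hc m) hpos.le]
  · simp [hG0, hpos.ne']
  · rw [div_le_one hpos]
    linarith [hG1 t ht]
  · show (G t - c 0) / (1 - c 0) ≤ -((c 0 - b) / (1 - c 0))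
    rw [← neg_div, div_le_div_iff_of_pos_right hpos]
    linarith [hGb t ht hj]

/-- For every `d ≥ 1` and `0 < ε < π` there exist a continuous
function `h : T^d → ℝ` and `β > 0` such that: all Fourier coefficients `ĥ(m)` are
real and nonnegative with `ĥ(0) = 0`; `sup h = h(0) = 1`; and `h(t) ≤ -β` whenever
`max_j |t_j| ≥ ε`. -/
theorem exists_auxiliary_function_h
    (d : ℕ) (hd : 1 ≤ d) (ε : ℝ) (hε : 0 < ε) (hεπ : ε < Real.pi) :
    ∃ (h : (Fin d → ℝ) → ℝ) (β : ℝ), 0 < β ∧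
      ContinuousOn h {t : Fin d → ℝ | ∀ j, |t j| ≤ Real.pi} ∧
      (∀ m : Fin d → ℤ, (fCoeff d h m).im = 0 ∧ 0 ≤ (fCoeff d h m).re) ∧
      fCoeff d h 0 = 0 ∧
      h 0 = 1 ∧
      (∀ t : Fin d → ℝ, (∀ j, |t j| ≤ Real.pi) → h t ≤ 1) ∧
      (∀ t : Fin d → ℝ, (∀ j, |t j| ≤ Real.pi) → (∃ j, ε ≤ |t j|) → h t ≤ -β) := by
  have hq1 : cos (ε / 2) ^ 2 < 1 := by
    refine pow_lt_one₀ (cos_nonneg_of_mem_Icc ⟨by linarith, by linarith⟩) ?_ two_ne_zero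
    simpa using cos_lt_cos_of_nonneg_of_le_pi le_rfl (by linarith) (by positivity : 0 < ε / 2)
  obtain ⟨n, hn, hsmall⟩ := exists_two_mul_pow_mul_pow_lt_one d (sq_nonneg _) hq1
  refine exists_auxiliary_function_h_of_kernel (G := fun t => ∏ j, cos (t j / 2) ^ (2 * n))
    (c := fun m => ∏ j, cosPowCoeff n (m j)) (by fun_prop) (fun m => ?_)
    (fun m => prod_nonneg fun j _ => cosPowCoeff_nonneg n (m j)) ?_
    (by simpa [pow_mul] using pow_lt_cosPowCoeff_zero_pow hn hsmall)
    (by simp) (fun t _ => prod_le_one (fun j _ => cos_half_pow_nonneg _ _)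
      (fun j _ => cos_half_pow_le_one _ _))
    (fun t ht hj => prod_cos_half_pow_le n hε.le ht hj)
  · rw [fCoeff_prod fun _ x => cos (x / 2) ^ (2 * n)]
    simp only [fourierCoeffIcc_cos_half_pow, Complex.ofReal_prod]
  · simpa using pow_lt_one₀ (cosPowCoeff_nonneg n 0) (cosPowCoeff_zero_lt_one hn.ne')
      (by omega : d ≠ 0)
end
end

section
/- Let r ≥ 0 and a_0, a_1, …, a_r ∈ R with Σ_{k=0}^r a_k ≠ 0, let (ξ_k)_{k∈Z} be i.i.d. standard Gaussian random variables, and define the moving-average process X_n = Σ_{k=0}^r a_k ξ_{n+k} for n ∈ Z. Then there exists a finite constant c (depending on a_0,…,a_r) such that for all N ≥ 1, P(X_1 > 0, X_2 > 0, …, X_N > 0) ≥ e^{-cN}. -/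
/-!
Fix a level `t` with `(∑ a) * t = ∑ |a| + 1`. If every input `ξ_j`, `1 ≤ j ≤ N + r`, lies
within distance `1` of `t`, then each `X_m`, `1 ≤ m ≤ N`, differs from `(∑ a) * t` by at most
`∑ |a|`, so it is at least `1`. By independence this event has probability `q ^ (N + r)`, where `q > 0` is the
Gaussian mass of the ball of radius `1` about `t`, and `q ^ (N + r) ≥ q ^ ((r + 1) N)`.
-/

open MeasureTheory ProbabilityTheory
open scoped ENNReal

lemma isOpenPosMeasure_gaussianReal (μ : ℝ) {v : NNReal} (hv : v ≠ 0) :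
    Measure.IsOpenPosMeasure (gaussianReal μ v) :=
  (gaussianReal_absolutelyContinuous' μ hv).isOpenPosMeasure

lemma ProbabilityTheory.iIndepFun.measure_biInter_preimage_eq_pow {Ω ι β : Type*}
    [MeasurableSpace Ω] [MeasurableSpace β] {μ : Measure Ω} {ν : Measure β} [NeZero ν]
    {ξ : ι → Ω → β} (hindep : iIndepFun ξ μ) (hdist : ∀ i, μ.map (ξ i) = ν) (S : Finset ι) {B : Set β}
    (hB : MeasurableSet B) :
    μ (⋂ i ∈ S, ξ i ⁻¹' B) = ν B ^ S.card := by
  have hmarginal (i : ι) : μ (ξ i ⁻¹' B) = ν B := by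
    have hξ : AEMeasurable (ξ i) μ := .of_map_ne_zero (by rw [hdist i]; exact NeZero.ne ν)
    rw [← hdist i, Measure.map_apply_of_aemeasurable hξ hB]
  rw [hindep.measure_inter_preimage_eq_mul S (fun _ _ => hB), Finset.prod_congr rfl
    (fun i _ => hmarginal i), Finset.prod_const]

lemma sum_mul_sub_sum_abs_le_sum_mul {ι : Type*} (s : Finset ι) (a x : ι → ℝ) (t : ℝ)
    (hx : ∀ k ∈ s, dist (x k) t ≤ 1) :
    (∑ k ∈ s, a k) * t - ∑ k ∈ s, |a k| ≤ ∑ k ∈ s, a k * x k := by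
  have hdev : |∑ k ∈ s, a k * x k - (∑ k ∈ s, a k) * t| ≤ ∑ k ∈ s, |a k| :=
    calc |∑ k ∈ s, a k * x k - (∑ k ∈ s, a k) * t| = |∑ k ∈ s, a k * (x k - t)| := by
          simp only [Finset.sum_mul, ← Finset.sum_sub_distrib, mul_sub]
      _ ≤ ∑ k ∈ s, |a k * (x k - t)| := Finset.abs_sum_le_sum_abs _ _
      _ ≤ ∑ k ∈ s, |a k| := Finset.sum_le_sum fun k hk => by
          rw [abs_mul, ← Real.dist_eq]
          exact mul_le_of_le_one_right (abs_nonneg _) (hx k hk)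
  linarith [(abs_le.mp hdev).1]

lemma exists_ofReal_exp_neg_mul_le_pow_add {q : ℝ≥0∞} (hq0 : 0 < q) (hq1 : q ≤ 1) (r : ℕ) :
    ∃ c : ℝ, ∀ N : ℕ, 1 ≤ N → ENNReal.ofReal (Real.exp (-c * N)) ≤ q ^ (N + r) := by
  have hqtop : q ≠ ∞ := ne_top_of_le_ne_top ENNReal.one_ne_top hq1
  have hqr : 0 < q.toReal := ENNReal.toReal_pos hq0.ne' hqtop
  refine ⟨-(r + 1) * Real.log q.toReal, fun N hN => ?_⟩
  have hexp : Real.exp (-(-(r + 1) * Real.log q.toReal) * N) = q.toReal ^ ((r + 1) * N) := by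
    rw [← Real.rpow_natCast, Real.rpow_def_of_pos hqr]
    push_cast
    ring_nf
  calc ENNReal.ofReal (Real.exp (-(-(r + 1) * Real.log q.toReal) * N))
      = q ^ ((r + 1) * N) := by
        rw [hexp, ENNReal.ofReal_pow ENNReal.toReal_nonneg, ENNReal.ofReal_toReal hqtop]
    _ ≤ q ^ (N + r) := pow_le_pow_of_le_one zero_le hq1 (by nlinarith)

theorem moving_average_persistence_exponential_lower_bound_general
    (r : ℕ) (a : Fin (r + 1) → ℝ) (ha : (∑ k, a k) ≠ 0)
    (Ω : Type) [MeasurableSpace Ω] (P : Measure Ω) [IsProbabilityMeasure P]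
    (ξ : ℤ → Ω → ℝ)
    (hdist : ∀ i, P.map (ξ i) = gaussianReal 0 1)
    (hindep : iIndepFun ξ P)
    (X : ℤ → Ω → ℝ)
    (hX : ∀ n ω, X n ω = ∑ k : Fin (r + 1), a k * ξ (n + (k : ℕ)) ω) :
    ∃ c : ℝ, ∀ N : ℕ, 1 ≤ N →
      ENNReal.ofReal (Real.exp (-c * (N : ℝ))) ≤
        P {ω | ∀ m : ℤ, 1 ≤ m → m ≤ (N : ℤ) → 0 < X m ω} := by
  set t : ℝ := (∑ k, |a k| + 1) / ∑ k, a k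
  set B : Set ℝ := Metric.ball t 1
  have := isOpenPosMeasure_gaussianReal 0 one_ne_zero
  obtain ⟨c, hc⟩ := exists_ofReal_exp_neg_mul_le_pow_add
    (Metric.measure_ball_pos (gaussianReal 0 1) t one_pos) prob_le_one r
  refine ⟨c, fun N hN => (hc N hN).trans ?_⟩
  have hevent : (⋂ j ∈ Finset.Icc (1 : ℤ) (N + r), ξ j ⁻¹' B) ⊆
      {ω | ∀ m : ℤ, 1 ≤ m → m ≤ (N : ℤ) → 0 < X m ω} := by
    intro ω hω m hm1 hmN
    simp only [Set.mem_iInter, Finset.mem_Icc, Set.mem_preimage, B, Metric.mem_ball] at hω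
    have hX_ge := sum_mul_sub_sum_abs_le_sum_mul Finset.univ a (fun k => ξ (m + (k : ℕ)) ω) t
      fun k _ => (hω _ ⟨by omega, by have := k.isLt; omega⟩).le
    rw [mul_div_cancel₀ _ ha] at hX_ge
    rw [hX]
    linarith
  calc gaussianReal 0 1 B ^ (N + r)
      = P (⋂ j ∈ Finset.Icc (1 : ℤ) (N + r), ξ j ⁻¹' B) := by
        rw [hindep.measure_biInter_preimage_eq_pow hdist _ Metric.isOpen_ball.measurableSet,
          Int.card_Icc]
        congr 1
        omega
    _ ≤ _ := measure_mono hevent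

/-- For a finite moving-average process
`X_n = Σ_{k=0}^r a_k ξ_{n+k}` with `Σ_k a_k ≠ 0` built from i.i.d. standard
Gaussians, there is a finite constant `c` such that
`P(X_1 > 0, …, X_N > 0) ≥ e^{-cN}` for all `N ≥ 1`. -/
theorem moving_average_persistence_exponential_lower_bound
    (r : ℕ) (a : Fin (r + 1) → ℝ) (ha : (∑ k, a k) ≠ 0)
    (Ω : Type) [MeasurableSpace Ω] (P : Measure Ω) [IsProbabilityMeasure P]
    (ξ : ℤ → Ω → ℝ)
    (hmeas : ∀ i, Measurable (ξ i))
    (hdist : ∀ i, P.map (ξ i) = gaussianReal 0 1)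
    (hindep : iIndepFun ξ P)
    (X : ℤ → Ω → ℝ)
    (hX : ∀ n ω, X n ω = ∑ k : Fin (r + 1), a k * ξ (n + (k : ℕ)) ω) :
    ∃ c : ℝ, ∀ N : ℕ, 1 ≤ N →
      ENNReal.ofReal (Real.exp (-c * (N : ℝ))) ≤
        P {ω | ∀ m : ℤ, 1 ≤ m → m ≤ (N : ℤ) → 0 < X m ω} :=
  moving_average_persistence_exponential_lower_bound_general r a ha Ω P ξ hdist hindep X hX
end
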